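/- arXiv:1105.2143 — 9 statements merged into one kernel-verified Lean document; each statement's English description precedes it below -/
import Mathlib

section
/- For all natural numbers m and elements α, y of a field, and every integer s ≥ 1, the sum ∑_{i=0}^m C(m,i) y^i α^{m-i} i^s equals (α+y)^m times ∑_{k=0}^s S(s,k) (y/(α+y))^k · m^{\underline{k}}, where S(s,k) are Stirling numbers of the second kind and m^{\underline{k}} is the falling factorial, provided α+y ≠ 0. -/
def stirling2 : ℕ → ℕ → ℕ
  | 0, 0 => 1
  | 0, _ + 1 => 0
  | _ + 1, 0 => 0
  | n + 1, k + 1 => (k + 1) * stirling2 n (k + 1) + stirling2 n k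

/-! Writing `i ^ s = ∑ₖ S(s, k) · i(i-1)⋯(i-k+1)` reduces the sum to the factorial moments of
the binomial weights. Since `C(m, i) · i(i-1)⋯(i-k+1) = m(m-1)⋯(m-k+1) · C(m-k, i-k)`, the binomial
theorem evaluates the `k`-th moment as `m(m-1)⋯(m-k+1) · y^k (α+y)^(m-k)`, which equals
`(α+y)^m (y/(α+y))^k · m(m-1)⋯(m-k+1)` when `α + y ≠ 0`. -/

open Finset

theorem stirling2_eq_stirlingSecond : stirling2 = Nat.stirlingSecond := by
  funext n k
  induction n generalizing k with
  | zero => cases k <;> rfl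
  | succ n ih => cases k <;> simp [stirling2, Nat.stirlingSecond_succ_succ, ih]

namespace Nat

theorem mul_descFactorial (n k : ℕ) :
    n * n.descFactorial k = n.descFactorial (k + 1) + k * n.descFactorial k := by
  rcases le_or_gt k n with h | h
  · rw [descFactorial_succ, ← Nat.add_mul, Nat.sub_add_cancel h]
  · simp [descFactorial_eq_zero_iff_lt.2 h]

theorem pow_eq_sum_stirlingSecond_mul_descFactorial (n s : ℕ) :
    n ^ s = ∑ k ∈ range (s + 1), stirlingSecond s k * n.descFactorial k := by
  induction s with
  | zero => simp
  | succ s ih =>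
    have hshift : ∑ k ∈ range (s + 1), (k + 1) * stirlingSecond s (k + 1) * n.descFactorial (k + 1)
        = ∑ k ∈ range (s + 1), k * stirlingSecond s k * n.descFactorial k := by
      calc _ = ∑ k ∈ range (s + 2), k * stirlingSecond s k * n.descFactorial k := by
            rw [sum_range_succ' _ (s + 1)]
            simp
        _ = _ := by simp [sum_range_succ _ (s + 1), stirlingSecond_eq_zero_of_lt (lt_succ_self s)]
    calc n ^ (s + 1)
        = ∑ k ∈ range (s + 1), stirlingSecond s k * (n * n.descFactorial k) := by
          rw [pow_succ, ih, sum_mul]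
          exact sum_congr rfl fun k _ => by ring
      _ = ∑ k ∈ range (s + 1), (k + 1) * stirlingSecond s (k + 1) * n.descFactorial (k + 1)
            + ∑ k ∈ range (s + 1), stirlingSecond s k * n.descFactorial (k + 1) := by
          rw [hshift, ← sum_add_distrib]
          exact sum_congr rfl fun k _ => by rw [mul_descFactorial]; ring
      _ = ∑ k ∈ range (s + 2), stirlingSecond (s + 1) k * n.descFactorial k := by
          simp only [sum_range_succ' _ (s + 1), stirlingSecond_succ_succ, stirlingSecond_succ_zero,
            add_mul, sum_add_distrib, zero_mul, add_zero]

theorem choose_add_mul_descFactorial (m k j : ℕ) :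
    m.choose (k + j) * (k + j).descFactorial k = m.descFactorial k * (m - k).choose j := by
  rw [descFactorial_eq_factorial_mul_choose, descFactorial_eq_factorial_mul_choose,
    mul_left_comm, choose_mul (le_add_right k j), Nat.add_sub_cancel_left]
  ring

end Nat

section BinomialMoments

variable {R : Type*} [CommSemiring R]

theorem sum_choose_mul_pow_mul_descFactorial (x y : R) (m k : ℕ) :
    ∑ i ∈ range (m + 1), (m.choose i : R) * y ^ i * x ^ (m - i) * (i.descFactorial k : R)
      = (m.descFactorial k : R) * y ^ k * (x + y) ^ (m - k) := by
  rcases le_or_gt k m with hkm | hmk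
  · have hvanish : ∀ i ∈ range k,
        (m.choose i : R) * y ^ i * x ^ (m - i) * (i.descFactorial k : R) = 0 := fun i hi => by
      simp [Nat.descFactorial_eq_zero_iff_lt.2 (mem_range.1 hi)]
    rw [show m + 1 = k + (m - k + 1) by omega, sum_range_add, sum_eq_zero hvanish, zero_add,
      add_comm x y, add_pow, mul_sum]
    refine sum_congr rfl fun j _ => ?_
    rw [show m - (k + j) = m - k - j by omega, ← Nat.cast_comm, pow_add]
    have hcoeff : (m.choose (k + j) : R) * ((k + j).descFactorial k : R)
        = (m.descFactorial k : R) * ((m - k).choose j : R) := by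
      rw [← Nat.cast_mul, ← Nat.cast_mul, Nat.choose_add_mul_descFactorial]
    calc _ = (m.choose (k + j) : R) * ((k + j).descFactorial k : R)
            * (y ^ k * y ^ j * x ^ (m - k - j)) := by ring
      _ = _ := by rw [hcoeff]; ring
  · have hvanish : ∀ i ∈ range (m + 1),
        (m.choose i : R) * y ^ i * x ^ (m - i) * (i.descFactorial k : R) = 0 := fun i hi => by
      simp [Nat.descFactorial_eq_zero_iff_lt.2 ((mem_range.1 hi).trans_le hmk)]
    simp [sum_eq_zero hvanish, Nat.descFactorial_eq_zero_iff_lt.2 hmk]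

theorem sum_choose_mul_pow_mul_pow_eq_sum_stirlingSecond (x y : R) (m s : ℕ) :
    ∑ i ∈ range (m + 1), (m.choose i : R) * y ^ i * x ^ (m - i) * (i : R) ^ s
      = ∑ k ∈ range (s + 1),
          (Nat.stirlingSecond s k : R) * (m.descFactorial k : R) * y ^ k * (x + y) ^ (m - k) := by
  have hpow (i : ℕ) : (i : R) ^ s
      = ∑ k ∈ range (s + 1), (Nat.stirlingSecond s k : R) * (i.descFactorial k : R) := by
    rw [← Nat.cast_pow, Nat.pow_eq_sum_stirlingSecond_mul_descFactorial i s]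
    simp only [Nat.cast_sum, Nat.cast_mul]
  simp_rw [hpow, mul_sum]
  rw [sum_comm]
  refine sum_congr rfl fun k _ => ?_
  rw [mul_assoc _ (m.descFactorial k : R), mul_assoc, ← sum_choose_mul_pow_mul_descFactorial,
    mul_sum]
  exact sum_congr rfl fun i _ => by ring

end BinomialMoments

theorem stmt0_general {F : Type*} [Field F] (α y : F) (hαy : α + y ≠ 0)
    (m s : ℕ) :
    ∑ i ∈ Finset.range (m + 1), (m.choose i : F) * y ^ i * α ^ (m - i) * (i : F) ^ s =
      (α + y) ^ m *
        ∑ k ∈ Finset.range (s + 1),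
          (stirling2 s k : F) * (y / (α + y)) ^ k * (m.descFactorial k : F) := by
  rw [sum_choose_mul_pow_mul_pow_eq_sum_stirlingSecond, stirling2_eq_stirlingSecond, mul_sum]
  refine sum_congr rfl fun k _ => ?_
  rcases le_or_gt k m with hkm | hmk
  · rw [div_pow, ← pow_sub_mul_pow (α + y) hkm]
    field_simp
  · simp [Nat.descFactorial_eq_zero_iff_lt.2 hmk]

theorem stmt0 {F : Type*} [Field F] (α y : F) (hαy : α + y ≠ 0)
    (m s : ℕ) (hs : 1 ≤ s) :
    ∑ i ∈ Finset.range (m + 1), (m.choose i : F) * y ^ i * α ^ (m - i) * (i : F) ^ s =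
      (α + y) ^ m *
        ∑ k ∈ Finset.range (s + 1),
          (stirling2 s k : F) * (y / (α + y)) ^ k * (m.descFactorial k : F) :=
  stmt0_general α y hαy m s
end

section
/- If P is a polynomial of degree at most r over a field F, α, y ∈ F with y ≠ 0 and α + y ≠ 0, then for every natural number m, ∑_{i=0}^m C(m,i) y^i α^{m-i} P(i) = (α+y)^m Q(m) for some polynomial Q over F of degree at most r (depending on P, α, y but not on m). -/
/-!
Write `P = D * X + P(0)`. Since `(i + 1) * C(m + 1, i + 1) = (m + 1) * C(m, i)`, the sum for `D * X`
at `m + 1` is `(m + 1) * y` times the sum for `D(X + 1)` at `m`, and `D(X + 1)` has smaller degree.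
Induction on the degree then yields `Q = P(0) + (y / (α + y)) * X * Q'(X - 1)`, where `Q'` belongs
to `D(X + 1)`.
-/

open Polynomial Finset

section CommRing

variable {R : Type*} [CommRing R]

def binomialSum (α y : R) (P : R[X]) (m : ℕ) : R :=
  ∑ i ∈ range (m + 1), (m.choose i : R) * y ^ i * α ^ (m - i) * P.eval (i : R)

theorem binomialSum_add (α y : R) (P₁ P₂ : R[X]) (m : ℕ) :
    binomialSum α y (P₁ + P₂) m = binomialSum α y P₁ m + binomialSum α y P₂ m := by
  simp only [binomialSum, eval_add, mul_add, sum_add_distrib]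

theorem binomialSum_C (α y c : R) (m : ℕ) : binomialSum α y (C c) m = c * (α + y) ^ m := by
  rw [binomialSum, add_comm α y, add_pow, mul_sum]
  exact sum_congr rfl fun i _ => by rw [eval_C]; ring

theorem binomialSum_zero_right (α y : R) (P : R[X]) : binomialSum α y P 0 = P.eval 0 := by
  simp [binomialSum]

theorem binomialSum_mul_X_succ (α y : R) (D : R[X]) (m : ℕ) :
    binomialSum α y (D * X) (m + 1) = (m + 1) * y * binomialSum α y (taylor 1 D) m := by
  rw [binomialSum, sum_range_succ', binomialSum, mul_sum]
  simp only [eval_mul, eval_X, Nat.cast_zero, mul_zero, add_zero, taylor_eval]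
  refine sum_congr rfl fun i _ => ?_
  have hchoose : ((m + 1).choose (i + 1) : R) * (i + 1) = (m + 1) * m.choose i := by
    exact_mod_cast congrArg (Nat.cast : ℕ → R) (Nat.add_one_mul_choose_eq m i).symm
  rw [Nat.add_sub_add_right]
  push_cast
  linear_combination y ^ (i + 1) * α ^ (m - i) * D.eval ((i : R) + 1) * hchoose

end CommRing

theorem exists_binomialSum_eq {F : Type*} [Field F] (α y : F) (hαy : α + y ≠ 0) (r : ℕ)
    (P : F[X]) (hP : P.natDegree ≤ r) :
    ∃ Q : F[X], Q.natDegree ≤ r ∧ ∀ m : ℕ, binomialSum α y P m = (α + y) ^ m * Q.eval (m : F) := by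
  induction r generalizing P with
  | zero =>
    obtain ⟨c, rfl⟩ := natDegree_eq_zero.mp (Nat.le_zero.mp hP)
    exact ⟨C c, by simp, fun m => by rw [binomialSum_C, eval_C, mul_comm]⟩
  | succ r ih =>
    have hD : (taylor 1 P.divX).natDegree ≤ r := by
      rw [natDegree_taylor, natDegree_divX_eq_natDegree_tsub_one]; omega
    obtain ⟨Q, hQ, hsum⟩ := ih _ hD
    refine ⟨C (P.coeff 0) + C (y / (α + y)) * (X * taylor (-1) Q), ?_, ?_⟩
    · refine natDegree_add_le_of_degree_le (by simp) ?_
      calc _ ≤ (X * taylor (-1) Q).natDegree := natDegree_C_mul_le _ _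
        _ ≤ 1 + r := natDegree_mul_le_of_le natDegree_X_le ((natDegree_taylor _ _).trans_le hQ)
        _ = r + 1 := add_comm 1 r
    · rintro (_ | m)
      · simp [binomialSum_zero_right, coeff_zero_eq_eval_zero]
      · conv_lhs => rw [← divX_mul_X_add P]
        rw [binomialSum_add, binomialSum_mul_X_succ, binomialSum_C, hsum]
        simp only [eval_add, eval_C, eval_mul, eval_X, taylor_eval]
        push_cast
        rw [add_neg_cancel_right]
        field_simp
        ring

theorem stmt2_general {F : Type*} [Field F] (r : ℕ) (P : Polynomial F) (hP : P.natDegree ≤ r)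
    (α y : F) (hαy : α + y ≠ 0) :
    ∃ Q : Polynomial F, Q.natDegree ≤ r ∧
      ∀ m : ℕ, ∑ i ∈ Finset.range (m + 1),
          (m.choose i : F) * y ^ i * α ^ (m - i) * P.eval (i : F) =
        (α + y) ^ m * Q.eval (m : F) :=
  exists_binomialSum_eq α y hαy r P hP

theorem stmt2 {F : Type*} [Field F] (r : ℕ) (P : Polynomial F) (hP : P.natDegree ≤ r)
    (α y : F) (hy : y ≠ 0) (hαy : α + y ≠ 0) :
    ∃ Q : Polynomial F, Q.natDegree ≤ r ∧
      ∀ m : ℕ, ∑ i ∈ Finset.range (m + 1),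
          (m.choose i : F) * y ^ i * α ^ (m - i) * P.eval (i : F) =
        (α + y) ^ m * Q.eval (m : F) :=
  stmt2_general r P hP α y hαy
end

section
/- Let a be a sequence over a commutative ring R with ordinary generating function A(t) = u(t)/f^R(t), where f(t) = t^r − ∑_{i=1}^r h_i t^{r-i} is its characteristic polynomial, f^R(t) = 1 − ∑_{i=1}^r h_i t^i its reflected polynomial, and u(t) of degree < r determined by the initial conditions. Then the sequence b defined by the generating function B(t) = A(t)/(1 − x t A(t)) satisfies a linear recurrence with characteristic polynomial (f^R(t) − x t u(t))^R, namely t^r − (h_1 + x u_0) t^{r-1} − ⋯ − (h_r + x u_{r-1}). -/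
/-!
Multiplying `A = mk a` by `F = f^R` leaves the polynomial `U = ∑_{i<r} u_i X^i`: the low
coefficients of `F * A` are the `u_i` by definition, and the recurrence kills all the others.
Multiplying `B * (1 - x X A) = A` by `F` then gives `B * (F - x X U) = U`, where
`F - x X U = 1 - ∑ (h_{i+1} + x u_i) X^(i+1)`; the coefficients of degree `≥ r` of this identity
are the claimed recurrence for `b`.
-/

open PowerSeries
open Finset hiding mk

section

variable {R : Type*} [CommRing R]

/-- The reflected characteristic polynomial of the recurrence
`c (n + r) = ∑_{i<r} g i * c (n + r - 1 - i)`, so `g i` plays the role of `h_{i+1}`. -/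
noncomputable def reflectedCharSeries (r : ℕ) (g : ℕ → R) : R⟦X⟧ :=
  1 - ∑ i ∈ range r, C (g i) * X ^ (i + 1)

noncomputable def truncSeries (r : ℕ) (v : ℕ → R) : R⟦X⟧ :=
  ∑ i ∈ range r, C (v i) * X ^ i

lemma coeff_truncSeries (r : ℕ) (v : ℕ → R) (n : ℕ) :
    coeff n (truncSeries r v) = if n < r then v n else 0 := by
  simp only [truncSeries, map_sum, coeff_C_mul, coeff_X_pow, mul_ite, mul_one, mul_zero,
    sum_ite_eq, mem_range]

lemma coeff_reflectedCharSeries_mul_mk (r : ℕ) (g c : ℕ → R) (n : ℕ) :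
    coeff n (reflectedCharSeries r g * mk c)
      = c n - ∑ i ∈ range (min r n), g i * c (n - 1 - i) := by
  have hterm : ∀ i, coeff n (C (g i) * X ^ (i + 1) * mk c)
      = if i < n then g i * c (n - 1 - i) else 0 := by
    intro i
    rw [mul_assoc, coeff_C_mul, coeff_X_pow_mul', coeff_mk, mul_ite, mul_zero, Nat.sub_sub]
    simp only [Nat.succ_le_iff, add_comm 1 i]
  rw [reflectedCharSeries, sub_mul, one_mul, map_sub, coeff_mk, sum_mul, map_sum]
  simp only [hterm, ← sum_filter]
  congr 2
  ext i
  simp only [mem_filter, mem_range, lt_min_iff]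

lemma recurrence_iff_coeff_reflectedCharSeries_mul_mk (r : ℕ) (g c : ℕ → R) :
    (∀ n, c (n + r) = ∑ i ∈ range r, g i * c (n + r - 1 - i))
      ↔ ∀ n, coeff (n + r) (reflectedCharSeries r g * mk c) = 0 := by
  simp only [coeff_reflectedCharSeries_mul_mk, min_eq_left (Nat.le_add_left _ _), sub_eq_zero]

lemma reflectedCharSeries_mul_mk_eq_truncSeries {r : ℕ} {g c u : ℕ → R}
    (hu : ∀ i < r, u i = c i - ∑ j ∈ range i, g j * c (i - 1 - j))
    (hc : ∀ n, c (n + r) = ∑ i ∈ range r, g i * c (n + r - 1 - i)) :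
    reflectedCharSeries r g * mk c = truncSeries r u := by
  ext n
  rw [coeff_truncSeries]
  rcases Nat.lt_or_ge n r with hn | hn
  · rw [if_pos hn, hu n hn, coeff_reflectedCharSeries_mul_mk, min_eq_right hn.le]
  · obtain ⟨m, rfl⟩ := Nat.exists_eq_add_of_le' hn
    rw [if_neg (by omega), (recurrence_iff_coeff_reflectedCharSeries_mul_mk r g c).1 hc m]

lemma reflectedCharSeries_add_mul (r : ℕ) (g v : ℕ → R) (x : R) :
    reflectedCharSeries r (fun i => g i + x * v i)
      = reflectedCharSeries r g - C x * X * truncSeries r v := by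
  simp only [reflectedCharSeries, truncSeries, mul_sum, sub_sub, ← sum_add_distrib, map_add,
    map_mul, pow_succ]
  congr 1
  refine sum_congr rfl fun i _ => ?_
  ring

end

theorem stmt5_general {R : Type*} [CommRing R] (r : ℕ) (x : R)
    (a b u h : ℕ → R)
    (hu0 : u 0 = a 0)
    (hui : ∀ i, 1 ≤ i → i < r →
      u i = a i - ∑ j ∈ Finset.range i, h (j + 1) * a (i - 1 - j))
    (ha : ∀ n, a (n + r) = ∑ i ∈ Finset.range r, h (i + 1) * a (n + r - 1 - i))
    (hb : PowerSeries.mk b * (1 - PowerSeries.C x * PowerSeries.X * PowerSeries.mk a)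
        = PowerSeries.mk a) :
    ∀ n, b (n + r) = ∑ i ∈ Finset.range r, (h (i + 1) + x * u i) * b (n + r - 1 - i) := by
  have hu : ∀ i < r, u i = a i - ∑ j ∈ range i, h (j + 1) * a (i - 1 - j) := by
    intro i hi
    rcases i.eq_zero_or_pos with rfl | hi0
    · simp [hu0]
    · exact hui i hi0 hi
  have hFA := reflectedCharSeries_mul_mk_eq_truncSeries hu ha
  have hBG : mk b * reflectedCharSeries r (fun i => h (i + 1) + x * u i) = truncSeries r u := by
    rw [reflectedCharSeries_add_mul]
    linear_combination reflectedCharSeries r (fun i => h (i + 1)) * hb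
      + (C x * X * mk b + 1) * hFA
  rw [recurrence_iff_coeff_reflectedCharSeries_mul_mk]
  intro n
  rw [mul_comm, hBG, coeff_truncSeries, if_neg (by omega)]

theorem stmt5 {R : Type*} [CommRing R] (r : ℕ) (hr : 1 ≤ r) (x : R)
    (a b u h : ℕ → R)
    (hu0 : u 0 = a 0)
    (hui : ∀ i, 1 ≤ i → i < r →
      u i = a i - ∑ j ∈ Finset.range i, h (j + 1) * a (i - 1 - j))
    (ha : ∀ n, a (n + r) = ∑ i ∈ Finset.range r, h (i + 1) * a (n + r - 1 - i))
    (hb : PowerSeries.mk b * (1 - PowerSeries.C x * PowerSeries.X * PowerSeries.mk a)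
        = PowerSeries.mk a) :
    ∀ n, b (n + r) = ∑ i ∈ Finset.range r, (h (i + 1) + x * u i) * b (n + r - 1 - i) :=
  stmt5_general r x a b u h hu0 hui ha hb
end

section
/- The operators L^{(y)} and I^{(x)} commute: for every sequence a over a commutative ring R and all x, y ∈ R, I^{(x)}(L^{(y)}(a)) = L^{(y)}(I^{(x)}(a)). -/
/-!
In terms of ordinary generating functions, `I^{(x)}` sends `A` to the solution `B` of
`B = A + x X A B`, which is unique because `1 - x X A` is a unit, and `L^{(y)}` sends `F` to
`G · F(X G)` with `G = 1 / (1 - y X)`. Substituting `X G` for `X` is a ring homomorphism, so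
applying it to `B = A + x X A B` and multiplying by `G` gives `L B = L A + x X (L A) (L B)`:
`L B` solves the equation defining `I^{(x)} (L A)`.
-/

open PowerSeries Finset

namespace PowerSeries

variable {R : Type*} [CommRing R]

noncomputable def geomSeries (y : R) : R⟦X⟧ := rescale y (mk 1)

theorem coeff_geomSeries_pow (y : R) (d n : ℕ) :
    coeff n (geomSeries y ^ (d + 1)) = (d + n).choose d * y ^ n := by
  rw [geomSeries, ← map_pow, mk_one_pow_eq_mk_choose_add, coeff_rescale, coeff_mk, mul_comm]

theorem coeff_subst_X_mul_eq_sum (G F : R⟦X⟧) {n N : ℕ} (hn : n < N) :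
    coeff n (F.subst (X * G)) = ∑ d ∈ range N, coeff d F * coeff n ((X * G) ^ d) := by
  have hs : HasSubst (X * G) := HasSubst.of_constantCoeff_zero' (by simp)
  rw [coeff_subst' hs, finsum_eq_sum_of_support_subset _ (s := range N)]
  · rfl
  · intro d hd
    contrapose! hd
    rw [coe_range, Set.mem_Iio, not_lt] at hd
    simp [mul_pow, coeff_X_pow_mul', (hn.trans_le hd).not_ge]

noncomputable def binomialTransform (y : R) (F : R⟦X⟧) : R⟦X⟧ :=
  geomSeries y * F.subst (X * geomSeries y)

theorem coeff_binomialTransform (y : R) (F : R⟦X⟧) (n : ℕ) :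
    coeff n (binomialTransform y F) =
      ∑ i ∈ range (n + 1), (n.choose i : R) * y ^ (n - i) * coeff i F := by
  have hG : ∀ d, geomSeries y * (X * geomSeries y) ^ d = X ^ d * geomSeries y ^ (d + 1) := by
    intro d
    ring
  calc coeff n (binomialTransform y F)
      = ∑ p ∈ antidiagonal n, coeff p.1 (geomSeries y) *
          ∑ d ∈ range (n + 1), coeff d F * coeff p.2 ((X * geomSeries y) ^ d) := by
        rw [binomialTransform, coeff_mul]
        refine sum_congr rfl fun p hp => ?_
        rw [coeff_subst_X_mul_eq_sum (N := n + 1) _ _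
          (by have := mem_antidiagonal.mp hp; omega)]
    _ = ∑ d ∈ range (n + 1), coeff d F * coeff n (geomSeries y * (X * geomSeries y) ^ d) := by
        simp_rw [coeff_mul, mul_sum]
        rw [sum_comm]
        exact sum_congr rfl fun d _ => sum_congr rfl fun p _ => by ring
    _ = _ := by
        refine sum_congr rfl fun i hi => ?_
        have hi : i ≤ n := Nat.lt_succ_iff.mp (mem_range.mp hi)
        rw [hG, coeff_X_pow_mul', if_pos hi, coeff_geomSeries_pow, Nat.add_sub_cancel' hi]
        ring

theorem binomialTransform_eq_add_C_mul_X_mul {x y : R} {A B : R⟦X⟧}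
    (h : B = A + C x * X * A * B) :
    binomialTransform y B =
      binomialTransform y A + C x * X * binomialTransform y A * binomialTransform y B := by
  have hs : HasSubst (X * geomSeries y) := HasSubst.of_constantCoeff_zero' (by simp)
  have hB := congrArg (subst (X * geomSeries y)) h
  rw [subst_add hs, subst_mul hs, subst_mul hs, subst_mul hs, subst_X hs, subst_C] at hB
  rw [show (MvPowerSeries.C x : R⟦X⟧) = C x from rfl] at hB
  simp only [binomialTransform]
  linear_combination geomSeries y * hB

theorem eq_of_eq_add_mul {Q M P P' : R⟦X⟧} (hM : constantCoeff M = 0)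
    (hP : P = Q + M * P) (hP' : P' = Q + M * P') : P = P' := by
  have hu : IsUnit (1 - M) := isUnit_iff_constantCoeff.mpr (by simp [hM])
  refine hu.mul_left_cancel ?_
  linear_combination hP - hP'

theorem mk_eq_add_C_mul_X_mul_of_recurrence {x : R} {a b : ℕ → R} (hb0 : b 0 = a 0)
    (hbn : ∀ n, 1 ≤ n → b n = a n + x * ∑ j ∈ range n, a (n - 1 - j) * b j) :
    mk b = mk a + C x * X * mk a * mk b := by
  ext (_ | n)
  · simp [hb0]
  · rw [coeff_mk, hbn _ n.succ_pos, map_add, coeff_mk, mul_assoc, mul_assoc, mul_comm (mk a),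
      coeff_C_mul, coeff_succ_X_mul, coeff_mul,
      Nat.sum_antidiagonal_eq_sum_range_succ fun i j => coeff i (mk b) * coeff j (mk a)]
    simp [mul_comm]

end PowerSeries

theorem stmt7 {R : Type*} [CommRing R] (x y : R) (a b c d : ℕ → R)
    (hb0 : b 0 = a 0)
    (hbn : ∀ n, 1 ≤ n → b n = a n + x * ∑ j ∈ Finset.range n, a (n - 1 - j) * b j)
    (hc : ∀ n, c n = ∑ i ∈ Finset.range (n + 1), (n.choose i : R) * y ^ (n - i) * a i)
    (hd0 : d 0 = c 0)
    (hdn : ∀ n, 1 ≤ n → d n = c n + x * ∑ j ∈ Finset.range n, c (n - 1 - j) * d j) :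
    ∀ n, d n = ∑ i ∈ Finset.range (n + 1), (n.choose i : R) * y ^ (n - i) * b i := by
  have hC : mk c = binomialTransform y (mk a) := by
    ext n
    simp only [coeff_mk, hc, coeff_binomialTransform]
  have hLB := binomialTransform_eq_add_C_mul_X_mul (y := y)
    (mk_eq_add_C_mul_X_mul_of_recurrence hb0 hbn)
  rw [← hC] at hLB
  have hD : mk d = binomialTransform y (mk b) :=
    eq_of_eq_add_mul (by simp) (mk_eq_add_C_mul_X_mul_of_recurrence hd0 hdn) hLB
  intro n
  rw [← coeff_mk n d, hD, coeff_binomialTransform]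
  simp only [coeff_mk]
end

section
/- Let W be a sequence in a field with W_0 = s_0, W_1 = s_1 and W_{n+2} = h W_{n+1} − k W_n, and let C_n = ∑_{i=0}^n C(n,i) (−h/2)^{n−i} W_i. Then C satisfies C_{n+2} = (Δ/4) C_n where Δ = h^2 − 4k; moreover C_0 = s_0, C_1 = δ/2 with δ = 2s_1 − s_0 h, and for n ≥ 2, C_n = (Δ^{⌊n/2⌋}/2^n)·δ^{n mod 2}·s_0^{1 − n mod 2}. -/
/-!
With `x = -h/2`, `C` is the binomial transform `n ↦ ∑ C(n,i) x^(n-i) W_i`, i.e. `(x + E)^n W`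
evaluated at `0` for the shift operator `E`. Two applications of Pascal's rule move `(x + E)^2`
onto `W`, and by the recurrence `(x + E)^2 W = x^2 W - k W = (Δ/4) W`.
Hence `C_{n+2} = (Δ/4) C_n`, and the closed form follows from `C_0 = s_0` and `C_1 = δ/2` by
splitting `n` by parity.
-/

open Finset

section BinomialTransform

variable {R : Type*} [CommSemiring R]

def binomialTransform (x : R) (V : ℕ → R) (n : ℕ) : R :=
  ∑ i ∈ range (n + 1), (n.choose i : R) * x ^ (n - i) * V i

theorem binomialTransform_succ (x : R) (V : ℕ → R) (n : ℕ) :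
    binomialTransform x V (n + 1) =
      binomialTransform x (fun i => x * V i + V (i + 1)) n := by
  have hlower : ∑ i ∈ range (n + 1), (n.choose (i + 1) : R) * x ^ (n - i) * V (i + 1)
      + x ^ (n + 1) * V 0 =
        ∑ i ∈ range (n + 1), (n.choose i : R) * x ^ (n - i) * (x * V i) := by
    have hshift := sum_range_succ' (fun i => (n.choose i : R) * x ^ (n + 1 - i) * V i) (n + 1)
    simp only [Nat.choose_succ_self, Nat.cast_zero, zero_mul, sum_range_succ _ (n + 1), add_zero,
      Nat.choose_zero_right, Nat.cast_one, one_mul, Nat.sub_zero, Nat.succ_sub_succ] at hshift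
    rw [← hshift]
    refine sum_congr rfl fun i hi => ?_
    rw [Nat.sub_add_comm (Nat.lt_succ_iff.mp (mem_range.mp hi)), pow_succ]
    ring
  simp only [binomialTransform, mul_add, sum_add_distrib, ← hlower]
  rw [sum_range_succ']
  simp only [Nat.choose_succ_succ, Nat.cast_add, add_mul, Nat.succ_sub_succ, sum_add_distrib,
    Nat.choose_zero_right, Nat.cast_one, one_mul, Nat.sub_zero]
  ring

theorem binomialTransform_add_two (x : R) (V : ℕ → R) (n : ℕ) :
    binomialTransform x V (n + 2) =
      binomialTransform x (fun i => x ^ 2 * V i + 2 * x * V (i + 1) + V (i + 2)) n := by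
  rw [binomialTransform_succ, binomialTransform_succ]
  congr 1
  funext i
  ring

theorem binomialTransform_const_mul (x c : R) (V : ℕ → R) (n : ℕ) :
    binomialTransform x (fun i => c * V i) n = c * binomialTransform x V n := by
  rw [binomialTransform, binomialTransform, mul_sum]
  exact sum_congr rfl fun i _ => by ring

end BinomialTransform

theorem eq_pow_div_two_mul_of_add_two {M : Type*} [Monoid M] {u : ℕ → M} {r : M}
    (hu : ∀ n, u (n + 2) = r * u n) (n : ℕ) : u n = r ^ (n / 2) * u (n % 2) := by
  have hstep : ∀ m j, u (2 * m + j) = r ^ m * u j := by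
    intro m j
    induction m with
    | zero => simp
    | succ m ih =>
      rw [show 2 * (m + 1) + j = 2 * m + j + 2 by ring, hu, ih, ← mul_assoc, ← pow_succ']
  calc u n = u (2 * (n / 2) + n % 2) := by rw [Nat.div_add_mod]
    _ = r ^ (n / 2) * u (n % 2) := hstep _ _

theorem stmt9 {F : Type*} [Field F] (h2 : (2 : F) ≠ 0) (h k s0 s1 : F)
    (W : ℕ → F) (hW0 : W 0 = s0) (hW1 : W 1 = s1)
    (hWrec : ∀ n, W (n + 2) = h * W (n + 1) - k * W n)
    (C : ℕ → F)
    (hC : ∀ n, C n = ∑ i ∈ Finset.range (n + 1),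
      (n.choose i : F) * (-h / 2) ^ (n - i) * W i) :
    (∀ n, C (n + 2) = (h ^ 2 - 4 * k) / 4 * C n) ∧
    C 0 = s0 ∧ C 1 = (2 * s1 - s0 * h) / 2 ∧
    ∀ n, 2 ≤ n → C n = (h ^ 2 - 4 * k) ^ (n / 2) / 2 ^ n *
      (2 * s1 - s0 * h) ^ (n % 2) * s0 ^ (1 - n % 2) := by
  have hCW : C = binomialTransform (-h / 2) W := funext hC
  have hrec : ∀ n, C (n + 2) = (h ^ 2 - 4 * k) / 4 * C n := by
    intro n
    have hsquare : (fun i => (-h / 2) ^ 2 * W i + 2 * (-h / 2) * W (i + 1) + W (i + 2)) =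
        fun i => (h ^ 2 - 4 * k) / 4 * W i := by
      funext i
      rw [hWrec, show (4 : F) = 2 ^ 2 by norm_num]
      field_simp
      ring
    rw [hCW, binomialTransform_add_two, hsquare, binomialTransform_const_mul]
  have hC0 : C 0 = s0 := by simp [hCW, binomialTransform, hW0]
  have hC1 : C 1 = (2 * s1 - s0 * h) / 2 :=
    calc C 1 = -h / 2 * s0 + s1 := by simp [hCW, binomialTransform, sum_range_succ, hW0, hW1]
      _ = (2 * s1 - s0 * h) / 2 := by field_simp; ring
  refine ⟨hrec, hC0, hC1, fun n _ => ?_⟩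
  rw [eq_pow_div_two_mul_of_add_two hrec n]
  obtain ⟨m, rfl | rfl⟩ := Nat.even_or_odd' n
  · simp only [Nat.mul_div_cancel_left m two_pos, Nat.mul_mod_right, hC0, pow_mul, div_pow]
    norm_num
  · simp only [Nat.mul_add_div two_pos, Nat.mul_add_mod, hC1, pow_succ, pow_mul, div_pow]
    norm_num
    field_simp
end

section
/- The Invert transform (with parameter 1) of the shifted Fibonacci sequence is the Tribonacci sequence: if b is the unique sequence with b = ρ(F) + ρ(ρ(F))∗b (where ρ(F) = (0, F_0, F_1, F_2, …)), then b_n = T_n for all n, where T is the Tribonacci sequence with T_0 = T_1 = 0, T_2 = 1, T_{n+3} = T_{n+2} + T_{n+1} + T_n. -/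
/-! In generating functions, `ρ F = x² / (1 - x - x²)` and `ρ (ρ F) = x³ / (1 - x - x²)`, so
`B = ρ F + ρ (ρ F) B` says `(1 - x - x² - x³) B = x²`, the generating function of the Tribonacci
numbers. On coefficients: `ρ F` obeys the Fibonacci recurrence, and so does `ρ (ρ F) ∗ b` up to the
extra term `b n`, which is exactly what makes `b` obey the Tribonacci recurrence. -/

open Finset

section Tribonacci

variable {R : Type*}

/-- Since `n - j - 2` truncates at `0` and `F₀ = 0`, this is the convolution `ρ (ρ F) ∗ f`. -/
def shiftFibConv [Semiring R] (f : ℕ → R) (n : ℕ) : R :=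
  ∑ j ∈ range (n + 1), (Nat.fib (n - j - 2) : R) * f j

theorem shiftFibConv_add_three [Semiring R] (f : ℕ → R) (n : ℕ) :
    shiftFibConv f (n + 3) = shiftFibConv f (n + 2) + shiftFibConv f (n + 1) + f n := by
  have hcoeff : ∀ j, (Nat.fib (n + 3 - j - 2) : R) * f j =
      (Nat.fib (n + 2 - j - 2) : R) * f j + (Nat.fib (n + 1 - j - 2) : R) * f j +
        if j = n then f n else 0 := by
    intro j
    rcases lt_trichotomy j n with hj | rfl | hj
    · obtain ⟨k, rfl⟩ : ∃ k, n = j + k + 1 := ⟨n - j - 1, by omega⟩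
      rw [show j + k + 1 + 3 - j - 2 = k + 2 by omega, show j + k + 1 + 2 - j - 2 = k + 1 by omega,
        show j + k + 1 + 1 - j - 2 = k by omega, Nat.fib_add_two, if_neg (by omega)]
      push_cast
      rw [add_mul, add_zero, add_comm]
    · simp
    · simp [show n + 3 - j - 2 = 0 by omega, show n + 2 - j - 2 = 0 by omega,
        show n + 1 - j - 2 = 0 by omega, hj.ne']
  have hwiden : shiftFibConv f (n + 2) + shiftFibConv f (n + 1) =
      ∑ j ∈ range (n + 4), ((Nat.fib (n + 2 - j - 2) : R) * f j +
        (Nat.fib (n + 1 - j - 2) : R) * f j) := by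
    simp [shiftFibConv, sum_add_distrib, sum_range_succ _ (n + 3), sum_range_succ _ (n + 2)]
  rw [hwiden, shiftFibConv, sum_congr rfl fun j _ => hcoeff j, sum_add_distrib,
    sum_ite_eq' _ n, if_pos (mem_range.2 (by omega))]

theorem eq_of_tribonacci [Add R] {u v : ℕ → R} (h0 : u 0 = v 0) (h1 : u 1 = v 1) (h2 : u 2 = v 2)
    (hu : ∀ n, u (n + 3) = u (n + 2) + u (n + 1) + u n)
    (hv : ∀ n, v (n + 3) = v (n + 2) + v (n + 1) + v n) : ∀ n, u n = v n
  | 0 => h0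
  | 1 => h1
  | 2 => h2
  | n + 3 => by
    rw [hu, hv, eq_of_tribonacci h0 h1 h2 hu hv n, eq_of_tribonacci h0 h1 h2 hu hv (n + 1),
      eq_of_tribonacci h0 h1 h2 hu hv (n + 2)]

theorem tribonacci_of_eq_shift_fib_add_shiftFibConv [Semiring R] {b : ℕ → R}
    (hb : ∀ n, b n = Nat.fib (n - 1) + shiftFibConv b n) (n : ℕ) :
    b (n + 3) = b (n + 2) + b (n + 1) + b n := by
  rw [hb (n + 3), hb (n + 2), hb (n + 1), shiftFibConv_add_three]
  rw [show n + 3 - 1 = n + 2 by omega, show n + 2 - 1 = n + 1 by omega, Nat.add_sub_cancel,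
    Nat.fib_add_two, Nat.cast_add]
  abel

end Tribonacci

theorem stmt10 (b T : ℕ → ℤ)
    (hb : ∀ n, b n = (Nat.fib (n - 1) : ℤ) +
      ∑ j ∈ Finset.range (n + 1), (Nat.fib (n - j - 2) : ℤ) * b j)
    (hT0 : T 0 = 0) (hT1 : T 1 = 0) (hT2 : T 2 = 1)
    (hTrec : ∀ n, T (n + 3) = T (n + 2) + T (n + 1) + T n) :
    ∀ n, b n = T n := by
  have hb0 : b 0 = 0 := by simpa using hb 0
  have hb1 : b 1 = 0 := by simpa [sum_range_succ] using hb 1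
  have hb2 : b 2 = 1 := by simpa [sum_range_succ] using hb 2
  exact eq_of_tribonacci (hb0.trans hT0.symm) (hb1.trans hT1.symm) (hb2.trans hT2.symm)
    (tribonacci_of_eq_shift_fib_add_shiftFibConv hb) hTrec
end

section
/- Generating-function identity for r-bonacci sequences: if A_r(t) = ∑_{n≥0} F^{(r)}_n t^n is the ordinary generating function of the r-bonacci sequence, then A_{r+1}(t) = t A_r(t) / (1 − t·(t A_r(t))). -/
/-!
The `k`-bonacci sequence is the impulse response of its recurrence, so multiplying its generating
function by `D_k = 1 - (t + ⋯ + t^k)` (`bonacciDenom k`) leaves only the impulse: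
`A_k · D_k = t^(k-1)`. Since `D_{r+1} = D_r - t^(r+1)`, multiplying the claimed identity by the
unit `D_r` reduces both sides to `t^r`.
-/

open PowerSeries Finset

namespace PowerSeries

variable {R : Type*} [CommRing R]

noncomputable def bonacciDenom (k : ℕ) : R⟦X⟧ :=
  1 - ∑ j ∈ range k, X ^ (j + 1)

theorem bonacciDenom_succ (k : ℕ) :
    (bonacciDenom (k + 1) : R⟦X⟧) = bonacciDenom k - X ^ (k + 1) := by
  rw [bonacciDenom, bonacciDenom, sum_range_succ]
  ring

theorem isUnit_bonacciDenom (k : ℕ) : IsUnit (bonacciDenom k : R⟦X⟧) := by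
  simp [isUnit_iff_constantCoeff, bonacciDenom]

theorem mk_mul_bonacciDenom (t : ℕ) (H : ℕ → R) (h0 : ∀ i, i < t → H i = 0) (h1 : H t = 1)
    (hrec : ∀ n, H (n + (t + 1)) = ∑ j ∈ range (t + 1), H (n + t - j)) :
    mk H * bonacciDenom (t + 1) = X ^ t := by
  ext n
  simp only [bonacciDenom, mul_sub, mul_one, mul_sum, map_sub, map_sum, coeff_mk, coeff_X_pow,
    coeff_mul_X_pow']
  rcases le_or_gt n t with h | h
  · rw [sum_eq_zero fun j _ => ite_eq_right_iff.2 fun _ => h0 _ (by omega), sub_zero]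
    rcases h.lt_or_eq with h | rfl
    · rw [if_neg h.ne, h0 n h]
    · rw [if_pos rfl, h1]
  · obtain ⟨m, rfl⟩ : ∃ m, n = m + (t + 1) := ⟨n - (t + 1), by omega⟩
    rw [if_neg (by omega), hrec m, sub_eq_zero]
    refine sum_congr rfl fun j hj => ?_
    rw [mem_range] at hj
    rw [if_pos (by omega)]
    congr 1
    omega

end PowerSeries

theorem stmt12 (r : ℕ) (hr : 1 ≤ r) (F G : ℕ → ℤ)
    (hF0 : ∀ i, i < r - 1 → F i = 0) (hF1 : F (r - 1) = 1)
    (hFrec : ∀ n, F (n + r) = ∑ j ∈ Finset.range r, F (n + r - 1 - j))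
    (hG0 : ∀ i, i < r → G i = 0) (hG1 : G r = 1)
    (hGrec : ∀ n, G (n + (r + 1)) = ∑ j ∈ Finset.range (r + 1), G (n + r - j)) :
    PowerSeries.mk G * (1 - PowerSeries.X * (PowerSeries.X * PowerSeries.mk F))
      = PowerSeries.X * PowerSeries.mk F := by
  obtain ⟨t, rfl⟩ : ∃ t, r = t + 1 := ⟨r - 1, by omega⟩
  have hF : PowerSeries.mk F * bonacciDenom (t + 1) = X ^ t :=
    mk_mul_bonacciDenom t F hF0 hF1 fun n => by simpa using hFrec n
  have hG : PowerSeries.mk G * bonacciDenom (t + 1 + 1) = X ^ (t + 1) :=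
    mk_mul_bonacciDenom (t + 1) G hG0 hG1 hGrec
  apply (isUnit_bonacciDenom (R := ℤ) (t + 1)).mul_left_injective
  calc PowerSeries.mk G * (1 - X * (X * PowerSeries.mk F)) * bonacciDenom (t + 1)
      = PowerSeries.mk G *
          (bonacciDenom (t + 1) - X ^ 2 * (PowerSeries.mk F * bonacciDenom (t + 1))) := by ring
    _ = PowerSeries.mk G * bonacciDenom (t + 1 + 1) := by rw [hF, bonacciDenom_succ (t + 1)]; ring
    _ = X * PowerSeries.mk F * bonacciDenom (t + 1) := by rw [hG, mul_assoc, hF]; ring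
end

section
/- For every sequence satisfying a second-order linear recurrence with characteristic polynomial t^2 − (α+β)t + αβ over a field, with initial conditions a_0 = 0, a_1 = 1, one has a_n = ∑_{i=1}^n C(n,i) α^{n−i} (β−α)^{i−1} for all n ≥ 1. -/
/-! Both sides satisfy the first-order recurrence `c (n + 1) = α * c n + β ^ n` with `c 0 = 0`.
For `a` this follows from the second-order recurrence, since `a (n + 2) - α * a (n + 1)` is
multiplied by `β` at each step. For the binomial sum it is Pascal's rule, where the terms carrying
`C(n, i - 1)` reassemble into `(α + (β - α)) ^ n = β ^ n` by the binomial theorem. -/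

open Finset

section BinomialSum

variable {R : Type*} [CommSemiring R]

theorem sum_Icc_choose_mul_pow_eq_sum_range (x y : R) (n : ℕ) :
    ∑ i ∈ Icc 1 n, (n.choose i : R) * x ^ (n - i) * y ^ (i - 1) =
      ∑ i ∈ range n, (n.choose (i + 1) : R) * x ^ (n - 1 - i) * y ^ i := by
  rw [← Finset.Ico_add_one_right_eq_Icc, sum_Ico_eq_sum_range, Nat.add_sub_cancel]
  refine sum_congr rfl fun i _ => ?_
  rw [add_comm 1 i, Nat.add_sub_cancel, Nat.sub_sub, add_comm 1 i]

theorem sum_range_choose_succ_mul_pow (x y : R) (n : ℕ) :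
    ∑ i ∈ range (n + 1), ((n + 1).choose (i + 1) : R) * x ^ (n - i) * y ^ i =
      x * ∑ i ∈ range n, (n.choose (i + 1) : R) * x ^ (n - 1 - i) * y ^ i + (x + y) ^ n := by
  have binomial : ∑ i ∈ range (n + 1), (n.choose i : R) * x ^ (n - i) * y ^ i = (x + y) ^ n := by
    rw [add_comm x y, add_pow]
    exact sum_congr rfl fun i _ => by ring
  have shifted : ∑ i ∈ range (n + 1), (n.choose (i + 1) : R) * x ^ (n - i) * y ^ i =
      x * ∑ i ∈ range n, (n.choose (i + 1) : R) * x ^ (n - 1 - i) * y ^ i := by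
    rw [sum_range_succ, Nat.choose_succ_self, Nat.cast_zero, zero_mul, zero_mul, add_zero, mul_sum]
    refine sum_congr rfl fun i hi => ?_
    rw [show n - i = n - 1 - i + 1 by have := mem_range.mp hi; omega, pow_succ]
    ring
  simp only [Nat.choose_succ_succ', Nat.cast_add, add_mul, sum_add_distrib, binomial, shifted]
  ring

end BinomialSum

theorem succ_eq_mul_add_pow_of_recurrence {R : Type*} [CommRing R] {α β : R} {a : ℕ → R}
    (ha0 : a 0 = 0) (ha1 : a 1 = 1)
    (harec : ∀ n, a (n + 2) = (α + β) * a (n + 1) - α * β * a n) (n : ℕ) :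
    a (n + 1) = α * a n + β ^ n := by
  induction n with
  | zero => simp [ha0, ha1]
  | succ n ih => rw [harec, ih]; ring

theorem stmt14 {F : Type*} [Field F] (α β : F) (a : ℕ → F)
    (ha0 : a 0 = 0) (ha1 : a 1 = 1)
    (harec : ∀ n, a (n + 2) = (α + β) * a (n + 1) - α * β * a n) :
    ∀ n, 1 ≤ n →
      a n = ∑ i ∈ Finset.Icc 1 n, (n.choose i : F) * α ^ (n - i) * (β - α) ^ (i - 1) := by
  rintro n -
  rw [sum_Icc_choose_mul_pow_eq_sum_range]
  induction n with
  | zero => simp [ha0]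
  | succ n ih =>
    rw [succ_eq_mul_add_pow_of_recurrence ha0 ha1 harec, ih, Nat.add_sub_cancel,
      sum_range_choose_succ_mul_pow, add_sub_cancel]
end

section
/- If b = I(a) is the Invert transform (parameter 1) of a sequence a, then b_n = B_{n+1}(a_0, a_1, …, a_n), where B_m denotes the complete ordinary Bell polynomial evaluated at the shifted arguments t_i = a_{i-1}: explicitly, b_n = ∑_{k=1}^{n+1} ∑_{i_1+⋯+i_k = n+1, i_j ≥ 1} a_{i_1−1} a_{i_2−1} ⋯ a_{i_k−1}, the sum over all ordered compositions of n+1. -/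
/-!
With `A = X * mk a`, the recurrence for `b` says exactly that `F = X * mk b` satisfies
`F = A + A * F`, i.e. `1 + F` is the inverse of `1 - A`. Since `A` has no constant term,
`A ^ (m + 1)` is divisible by `X ^ (m + 1)`, so `1 + F` agrees with the geometric sum
`∑ k ≤ m, A ^ k` up to degree `m`.
-/

open Finset (range)

namespace PowerSeries

variable {R : Type*} [CommRing R]

theorem coeff_eq_sum_coeff_pow_of_mul_one_sub_eq_one {A G : R⟦X⟧} (hA : constantCoeff A = 0)
    (hG : G * (1 - A) = 1) (m : ℕ) :
    coeff m G = ∑ k ∈ range (m + 1), coeff m (A ^ k) := by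
  have hgeom : ∑ k ∈ range (m + 1), A ^ k = G - G * A ^ (m + 1) :=
    calc ∑ k ∈ range (m + 1), A ^ k = G * (1 - A) * ∑ k ∈ range (m + 1), A ^ k := by
          rw [hG, one_mul]
      _ = G - G * A ^ (m + 1) := by rw [mul_assoc, mul_neg_geom_sum, mul_one_sub]
  have htail : coeff m (G * A ^ (m + 1)) = 0 :=
    X_pow_dvd_iff.mp ((pow_dvd_pow_of_dvd (X_dvd_iff.mpr hA) _).mul_left G) m m.lt_succ_self
  rw [← map_sum, hgeom, map_sub, htail, sub_zero]

theorem mk_eq_add_X_mul_mk_mul_mk {a b : ℕ → R}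
    (hb : ∀ n, b n = a n + ∑ j ∈ range n, a (n - 1 - j) * b j) :
    mk b = mk a + X * (mk b * mk a) := by
  ext (_ | n)
  · simpa using hb 0
  · rw [coeff_mk, hb, map_add, coeff_succ_X_mul, coeff_mul,
      Finset.Nat.sum_antidiagonal_eq_sum_range_succ (fun i j => coeff i (mk b) * coeff j (mk a))]
    simp [mul_comm]

theorem one_add_X_mul_mk_mul_one_sub_X_mul_mk {a b : ℕ → R}
    (hb : ∀ n, b n = a n + ∑ j ∈ range n, a (n - 1 - j) * b j) :
    (1 + X * mk b) * (1 - X * mk a) = 1 := by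
  linear_combination X * mk_eq_add_X_mul_mk_mul_mk hb

end PowerSeries

open PowerSeries in
theorem stmt17 {R : Type*} [CommRing R] (a b : ℕ → R)
    (hb0 : b 0 = a 0)
    (hbn : ∀ n, 1 ≤ n → b n = a n + ∑ j ∈ Finset.range n, a (n - 1 - j) * b j) :
    ∀ n, b n = ∑ k ∈ Finset.Icc 1 (n + 1),
      PowerSeries.coeff (R := R) (n + 1) ((PowerSeries.X * PowerSeries.mk a) ^ k) := by
  have hb : ∀ n, b n = a n + ∑ j ∈ Finset.range n, a (n - 1 - j) * b j := by
    rintro (_ | n)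
    · simpa using hb0
    · exact hbn _ n.succ_pos
  have hA : constantCoeff (X * mk a) = 0 := by simp
  intro n
  have h := coeff_eq_sum_coeff_pow_of_mul_one_sub_eq_one hA
    (one_add_X_mul_mk_mul_one_sub_X_mul_mk hb) (n + 1)
  rw [Finset.sum_range_succ'] at h
  simp only [map_add, coeff_one, Nat.add_eq_zero_iff, one_ne_zero, and_false, ↓reduceIte,
    coeff_succ_X_mul, coeff_mk, zero_add, pow_zero, add_zero] at h
  rw [h, ← Finset.Ico_add_one_right_eq_Icc, Finset.sum_Ico_eq_sum_range]
  simp [add_comm]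
end
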